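/- Suppose each edge of a finite graph is covered by at most one triangle of T, each vertex lies in n_v ≤ 3 triangles, and real numbers 0 ≤ d_v ≤ M satisfy 2·∑_{v∈V}(M − d_v)·d_v ≥ ∑_{(u,v)∈E} d_u·d_v. Then ∑_{[a,b,c]∈T} g(d_a,d_b,d_c) ≤ (3M²/2)·|V_ex|, where g(a,b,c) = (a+b)² + (a+c)² + (b+c)² + ab + ac + bc − 2M(a+b+c) and V_ex = {v : n_v < 3}. -/
import Mathlib


/-- The quadratic triangle function
g(a,b,c) = (a+b)² + (a+c)² + (b+c)² + ab + ac + bc − 2M(a+b+c). -/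
def gTri (M a b c : ℝ) : ℝ :=
  (a + b) ^ 2 + (a + c) ^ 2 + (b + c) ^ 2 + a * b + a * c + b * c - 2 * M * (a + b + c)

/-- The three edges of a triangle [a,b,c]. -/
def triEdges {V : Type*} [DecidableEq V] (t : V × V × V) : Finset (V × V) :=
  {(t.1, t.2.1), (t.1, t.2.2), (t.2.1, t.2.2)}

open Finset in
/-- If each edge of the graph is covered by at most one triangle of `T`, each vertex lies in
n_v ≤ 3 triangles, 0 ≤ d_v ≤ M, and 2·∑_v (M−d_v)d_v ≥ ∑_{(u,v)∈E} d_u·d_v, then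
∑_{[a,b,c]∈T} g(d_a,d_b,d_c) ≤ (3M²/2)·|V_ex|, where V_ex = {v : n_v < 3}. -/
theorem triangle_constraint_bound (V : Type*) [Fintype V] [DecidableEq V]
    (E : Finset (V × V)) (T : Finset (V × V × V))
    (hdistinct : ∀ t ∈ T, t.1 ≠ t.2.1 ∧ t.1 ≠ t.2.2 ∧ t.2.1 ≠ t.2.2)
    (hcover : ∀ t ∈ T, triEdges t ⊆ E)
    (hdisj : ∀ t ∈ T, ∀ t' ∈ T, t ≠ t' → Disjoint (triEdges t) (triEdges t'))
    (n : V → ℕ)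
    (hn : ∀ v, n v = (T.filter (fun t => t.1 = v ∨ t.2.1 = v ∨ t.2.2 = v)).card)
    (hn3 : ∀ v, n v ≤ 3)
    (M : ℝ) (hM : 0 < M) (d : V → ℝ) (hd0 : ∀ v, 0 ≤ d v) (hdM : ∀ v, d v ≤ M)
    (hfeas : ∑ e ∈ E, d e.1 * d e.2 ≤ 2 * ∑ v, (M - d v) * d v) :
    ∑ t ∈ T, gTri M (d t.1) (d t.2.1) (d t.2.2) ≤
      (3 * M ^ 2 / 2) * ((univ.filter (fun v => n v < 3)).card : ℝ) := by
  classical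
  set h : V → ℝ := fun v => 2 * d v ^ 2 - 2 * M * d v with hh
  have key1 : ∀ t ∈ T, gTri M (d t.1) (d t.2.1) (d t.2.2)
      = (h t.1 + h t.2.1 + h t.2.2) + 3 * ∑ e ∈ triEdges t, d e.1 * d e.2 := by
    intro t ht
    obtain ⟨h12, h13, h23⟩ := hdistinct t ht
    have e1 : ((t.1, t.2.1) : V × V) ≠ (t.1, t.2.2) := by simp [h23]
    have f1 : ¬((t.1, t.2.1) : V × V) ∈ ({(t.1, t.2.2), (t.2.1, t.2.2)} : Finset (V × V)) := by
      simp only [Finset.mem_insert, Finset.mem_singleton]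
      push_neg
      exact ⟨e1, fun he => h12 (congrArg Prod.fst he)⟩
    have f2 : ¬((t.1, t.2.2) : V × V) ∈ ({(t.2.1, t.2.2)} : Finset (V × V)) := by
      simp only [Finset.mem_singleton]
      exact fun he => h12 (congrArg Prod.fst he)
    rw [triEdges, Finset.sum_insert f1, Finset.sum_insert f2, Finset.sum_singleton]
    simp only [gTri, hh]; ring
  rw [Finset.sum_congr rfl key1, Finset.sum_add_distrib, ← Finset.mul_sum]
  have hbi : ∑ t ∈ T, ∑ e ∈ triEdges t, d e.1 * d e.2
      ≤ 2 * ∑ v, (M - d v) * d v := by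
    rw [← Finset.sum_biUnion (fun t ht t' ht' hne => hdisj t ht t' ht' hne)]
    refine le_trans (Finset.sum_le_sum_of_subset_of_nonneg ?_ ?_) hfeas
    · intro e he
      obtain ⟨t, ht, het⟩ := Finset.mem_biUnion.mp he
      exact hcover t ht het
    · intro e _ _; exact mul_nonneg (hd0 _) (hd0 _)
  have hvert : ∑ t ∈ T, (h t.1 + h t.2.1 + h t.2.2) = ∑ v, (n v : ℝ) * h v := by
    have step : ∀ t ∈ T, h t.1 + h t.2.1 + h t.2.2
        = ∑ v, if t.1 = v ∨ t.2.1 = v ∨ t.2.2 = v then h v else 0 := by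
      intro t ht
      obtain ⟨h12, h13, h23⟩ := hdistinct t ht
      rw [← Finset.sum_filter]
      have hset : univ.filter (fun v => t.1 = v ∨ t.2.1 = v ∨ t.2.2 = v)
          = {t.1, t.2.1, t.2.2} := by
        ext v
        simp only [mem_filter, mem_univ, true_and, mem_insert, mem_singleton]
        constructor
        · rintro (rfl | rfl | rfl) <;> simp
        · rintro (rfl | rfl | rfl) <;> simp
      rw [hset, Finset.sum_insert (by simp [h12, h13]),
        Finset.sum_insert (by simp [h23]), Finset.sum_singleton]
      ring
    rw [Finset.sum_congr rfl step, Finset.sum_comm]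
    refine Finset.sum_congr rfl fun v _ => ?_
    rw [← Finset.sum_filter, Finset.sum_const, nsmul_eq_mul, hn v]
  rw [hvert]
  have hfinal : ∑ v, ((n v : ℝ) * h v) + 3 * ∑ t ∈ T, ∑ e ∈ triEdges t, d e.1 * d e.2
      ≤ ∑ v, ((n v : ℝ) * h v + 6 * ((M - d v) * d v)) := by
    rw [Finset.sum_add_distrib, ← Finset.mul_sum]
    have : (3:ℝ) * ∑ t ∈ T, ∑ e ∈ triEdges t, d e.1 * d e.2
        ≤ 6 * ∑ v, (M - d v) * d v := by linarith
    linarith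
  refine le_trans hfinal (le_trans (Finset.sum_le_sum
    (fun v _ => ?_ : ∀ v ∈ univ, (n v : ℝ) * h v + 6 * ((M - d v) * d v)
      ≤ if n v < 3 then 3 * M ^ 2 / 2 else 0)) ?_)
  · have hd := hd0 v
    have hdm := hdM v
    have hsq : (M - d v) * d v ≤ M ^ 2 / 4 := by nlinarith [sq_nonneg (M - 2 * d v)]
    have hmd : (0:ℝ) ≤ (M - d v) * d v := mul_nonneg (by linarith) hd
    by_cases hv : n v < 3
    · simp only [hv, if_true, hh]
      have hn' : (n v : ℝ) ≤ 3 := by exact_mod_cast hn3 v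
      have hn0 : (0:ℝ) ≤ (n v : ℝ) := Nat.cast_nonneg _
      nlinarith [mul_le_mul_of_nonneg_left hsq (show (0:ℝ) ≤ 6 - 2 * (n v : ℝ) by linarith),
        mul_nonneg hn0 hmd]
    · have h3 : n v = 3 := le_antisymm (hn3 v) (not_lt.mp hv)
      simp only [hv, if_false, h3, hh]
      push_cast
      nlinarith [sq_nonneg (d v)]
  · rw [← Finset.sum_filter, Finset.sum_const, nsmul_eq_mul, mul_comm]
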